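/- With R : G_n → G_n defined by R(x) = S(x)(x_1 ⋯ x_n) as above, the composition R² equals (−1)^{n(n−1)/2} times the identity map on G_n. -/

import Mathlib

/-! Since `S` is multiplicative and sends `x_i` to `∂_i`, we have `R (x_i y) = ∂_i (R y)`.
Together with the Leibniz rule for `∂_i` this gives, by induction over monomials `y`,
`R (∂_i y) = x_i (R y)`. Hence `R²` commutes with left multiplication by every `x_i`, so it is
left multiplication by `R²(1) = R (x_1 ⋯ x_n) = ∂_1 ⋯ ∂_n (x_1 ⋯ x_n)`; moving `∂_{i+1} ⋯ ∂_n`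
past `x_i` costs `(-1)^(n-i)`, in total `(-1)^(n(n-1)/2)`. -/

abbrev Grass (n : ℕ) := ExteriorAlgebra ℂ (Fin n → ℂ)

/-- Left multiplication by the generator `x_i`. -/
noncomputable def mulX (n : ℕ) (i : Fin n) : Module.End ℂ (Grass n) :=
  LinearMap.mulLeft ℂ (ExteriorAlgebra.ι ℂ (Pi.single i 1))

/-- The top element `x_1 ⋯ x_n`. -/
noncomputable def topEl (n : ℕ) : Grass n :=
  ((List.finRange n).map fun i => ExteriorAlgebra.ι ℂ (Pi.single i (1 : ℂ))).prod

theorem Submodule.eq_top_of_one_mem_of_mul_mem {R A : Type*} [CommSemiring R] [Semiring A]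
    [Algebra R A] {s : Set A} (hs : Algebra.adjoin R s = ⊤) {p : Submodule R A}
    (one_mem : 1 ∈ p) (mul_mem : ∀ x ∈ s, ∀ y ∈ p, x * y ∈ p) : p = ⊤ := by
  refine eq_top_iff'.2 fun a => ?_
  have ha : a ∈ Submodule.span R (Submonoid.closure s) := by
    rw [← Algebra.adjoin_eq_span, hs]; trivial
  refine Submodule.span_le.2 (fun m hm => ?_) ha
  induction hm using Submonoid.closure_induction_left with
  | one => exact one_mem
  | mul_left x hx y _ hy => exact mul_mem x hx y hy

namespace ExteriorAlgebra

variable {R M : Type*} [CommRing R] [AddCommGroup M] [Module R M]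

theorem adjoin_range_ι_comp_basis {κ : Type*} (b : Module.Basis κ R M) :
    Algebra.adjoin R (Set.range (ι R ∘ b)) = ⊤ := by
  rw [eq_top_iff, ← CliffordAlgebra.adjoin_range_ι, Algebra.adjoin_le_iff]
  rintro _ ⟨m, rfl⟩
  have hm : ι R m ∈ Submodule.span R (Set.range (ι R ∘ b)) := by
    rw [Set.range_comp, ← Submodule.map_span, b.span_eq]
    exact Submodule.mem_map_of_mem trivial
  exact Algebra.span_le_adjoin R _ hm

variable (R) {I : Type*} [DecidableEq I]

noncomputable def gen (i : I) : ExteriorAlgebra R (I → R) := ι R (Pi.single i 1)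

theorem adjoin_range_gen [Finite I] : Algebra.adjoin R (Set.range (gen R : I → _)) = ⊤ := by
  convert adjoin_range_ι_comp_basis (Pi.basisFun R I)
  ext i
  simp [gen, Pi.basisFun_apply]

variable {R}

def IsLeftLeibniz (der : I → Module.End R (ExteriorAlgebra R (I → R))) : Prop :=
  ∀ i v x, der i (ι R v * x) = v i • x - ι R v * der i x

variable {der : I → Module.End R (ExteriorAlgebra R (I → R))}

theorem IsLeftLeibniz.apply_gen_mul (hder : IsLeftLeibniz der) (i j : I)
    (x : ExteriorAlgebra R (I → R)) :
    der i (gen R j * x) = (Pi.single j 1 : I → R) i • x - gen R j * der i x :=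
  hder i _ x

theorem IsLeftLeibniz.apply_gen_mul_self (hder : IsLeftLeibniz der) (i : I)
    (x : ExteriorAlgebra R (I → R)) : der i (gen R i * x) = x - gen R i * der i x := by
  simpa using hder.apply_gen_mul i i x

theorem IsLeftLeibniz.apply_gen_mul_of_ne (hder : IsLeftLeibniz der) {i j : I}
    (hij : j ≠ i) (x : ExteriorAlgebra R (I → R)) :
    der j (gen R i * x) = -(gen R i * der j x) := by
  simpa [hij] using hder.apply_gen_mul j i x

theorem IsLeftLeibniz.listProd_apply_gen_mul (hder : IsLeftLeibniz der) {i : I}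
    {l : List I} (hi : i ∉ l) (x : ExteriorAlgebra R (I → R)) :
    (l.map der).prod (gen R i * x) = (-1 : R) ^ l.length • (gen R i * (l.map der).prod x) := by
  induction l with
  | nil => simp
  | cons j t ih =>
    rw [List.mem_cons, not_or] at hi
    obtain ⟨hji, hit⟩ := hi
    simp only [List.map_cons, List.prod_cons, Module.End.mul_apply, ih hit, map_smul,
      hder.apply_gen_mul_of_ne (Ne.symm hji), List.length_cons, pow_succ, mul_smul, smul_neg,
      neg_one_smul]

theorem IsLeftLeibniz.listProd_apply_listProd_gen (hder : IsLeftLeibniz der)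
    (hder1 : ∀ i, der i 1 = 0) {l : List I} (hl : l.Nodup) :
    (l.map der).prod (l.map (gen R)).prod =
      (-1 : R) ^ (l.length * (l.length - 1) / 2) • 1 := by
  induction l with
  | nil => simp
  | cons i t ih =>
    obtain ⟨hit, ht⟩ := List.nodup_cons.1 hl
    rw [List.map_cons, List.prod_cons, List.map_cons, List.prod_cons, Module.End.mul_apply,
      hder.listProd_apply_gen_mul hit, ih ht, mul_smul_comm, map_smul, map_smul, mul_one,
      ← mul_one (gen R i), hder.apply_gen_mul_self, hder1, mul_zero, sub_zero, smul_smul,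
      ← pow_add, List.length_cons, Nat.triangle_succ, add_comm]

end ExteriorAlgebra

open ExteriorAlgebra

namespace Grass

variable {n : ℕ} (S : Module.End ℂ (Grass n) ≃ₐ[ℂ] Module.End ℂ (Grass n))

theorem gen_mul_topEl (i : Fin n) : gen ℂ i * topEl n = 0 := by
  simpa [gen, topEl, List.ofFn_eq_map] using ι_mul_prod_list (R := ℂ) (fun j => Pi.single j 1) i

noncomputable def R : Grass n →ₗ[ℂ] Grass n :=
  LinearMap.applyₗ (topEl n) ∘ₗ S.toLinearMap ∘ₗ LinearMap.mul ℂ (Grass n)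

theorem R_apply (x : Grass n) : R S x = S (LinearMap.mulLeft ℂ x) (topEl n) := rfl

theorem R_one : R S 1 = topEl n := by
  rw [R_apply, LinearMap.mulLeft_one, ← Module.End.one_eq_id, map_one, Module.End.one_apply]

variable {S} {der : Fin n → Module.End ℂ (Grass n)} (hSx : ∀ i, S (mulX n i) = der i)
include hSx

theorem R_gen_mul (i : Fin n) (y : Grass n) : R S (gen ℂ i * y) = der i (R S y) := by
  rw [R_apply, R_apply, LinearMap.mulLeft_mul, ← Module.End.mul_eq_comp, map_mul]
  exact congr($(hSx i) _)

theorem R_listProd_gen_mul (l : List (Fin n)) (y : Grass n) :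
    R S ((l.map (gen ℂ)).prod * y) = (l.map der).prod (R S y) := by
  induction l with
  | nil => simp
  | cons i t ih => simp [mul_assoc, R_gen_mul hSx, ih]

variable (hder : IsLeftLeibniz der) (hder1 : ∀ i, der i 1 = 0)
include hder hder1

theorem R_topEl : R S (topEl n) = (-1 : ℂ) ^ (n * (n - 1) / 2) • 1 := by
  calc R S (topEl n) = R S (((List.finRange n).map (gen ℂ)).prod * 1) := by rw [mul_one]; rfl
    _ = ((List.finRange n).map der).prod ((List.finRange n).map (gen ℂ)).prod := by
      rw [R_listProd_gen_mul hSx, R_one]; rfl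
    _ = _ := by simpa using hder.listProd_apply_listProd_gen hder1 (List.nodup_finRange n)

theorem R_der (i : Fin n) (y : Grass n) : R S (der i y) = gen ℂ i * R S y := by
  let p := ⨅ i, LinearMap.eqLocus (R S ∘ₗ der i) (LinearMap.mulLeft ℂ (gen ℂ i) ∘ₗ R S)
  suffices hp : p = ⊤ from (Submodule.mem_iInf _).1 (hp ▸ Submodule.mem_top (x := y)) i
  refine Submodule.eq_top_of_one_mem_of_mul_mem (adjoin_range_gen ℂ) ?_ ?_
  · refine (Submodule.mem_iInf _).2 fun i => ?_
    simp [hder1, R_one, gen_mul_topEl]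
  · rintro _ ⟨j, rfl⟩ y hy
    simp only [p, Submodule.mem_iInf, LinearMap.mem_eqLocus, LinearMap.comp_apply,
      LinearMap.mulLeft_apply] at hy ⊢
    intro i
    calc R S (der i (gen ℂ j * y))
        = (Pi.single j 1 : Fin n → ℂ) i • R S y - der j (R S (der i y)) := by
          rw [hder.apply_gen_mul, map_sub, map_smul, R_gen_mul hSx]
      _ = gen ℂ i * der j (R S y) := by
          rw [hy, hder.apply_gen_mul, Pi.single_comm, sub_sub_cancel]
      _ = gen ℂ i * R S (gen ℂ j * y) := by rw [R_gen_mul hSx]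

theorem R_R (x : Grass n) : R S (R S x) = (-1 : ℂ) ^ (n * (n - 1) / 2) • x := by
  let p := LinearMap.eqLocus (R S ∘ₗ R S) ((-1 : ℂ) ^ (n * (n - 1) / 2) • LinearMap.id)
  suffices hp : p = ⊤ from LinearMap.congr_fun (LinearMap.eqLocus_eq_top.1 hp) x
  refine Submodule.eq_top_of_one_mem_of_mul_mem (adjoin_range_gen ℂ) ?_ ?_
  · simp [p, R_one, R_topEl hSx hder hder1]
  · rintro _ ⟨i, rfl⟩ y hy
    simp only [p, LinearMap.mem_eqLocus, LinearMap.comp_apply, LinearMap.smul_apply,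
      LinearMap.id_apply] at hy ⊢
    rw [R_gen_mul hSx, R_der hSx hder hder1, hy, mul_smul_comm]

end Grass

theorem grassmann_R_squared_general (n : ℕ)
    (der : Fin n → Module.End ℂ (Grass n))
    (hder1 : ∀ i, der i 1 = 0)
    (hderL : ∀ (i : Fin n) (v : Fin n → ℂ) (x : Grass n),
      der i (ExteriorAlgebra.ι ℂ v * x) = v i • x - ExteriorAlgebra.ι ℂ v * der i x)
    (S : Module.End ℂ (Grass n) ≃ₐ[ℂ] Module.End ℂ (Grass n))
    (hSx : ∀ i, S (mulX n i) = der i) :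
    letI R : Grass n → Grass n := fun x => S (LinearMap.mulLeft ℂ x) (topEl n)
    ∀ x : Grass n, R (R x) = ((-1 : ℂ) ^ (n * (n - 1) / 2)) • x :=
  Grass.R_R hSx hderL hder1

theorem grassmann_R_squared (n : ℕ)
    (der : Fin n → Module.End ℂ (Grass n))
    (hder1 : ∀ i, der i 1 = 0)
    (hderL : ∀ (i : Fin n) (v : Fin n → ℂ) (x : Grass n),
      der i (ExteriorAlgebra.ι ℂ v * x) = v i • x - ExteriorAlgebra.ι ℂ v * der i x)
    (S : Module.End ℂ (Grass n) ≃ₐ[ℂ] Module.End ℂ (Grass n))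
    (hSx : ∀ i, S (mulX n i) = der i)
    (hSd : ∀ i, S (der i) = mulX n i)
    (hSinv : ∀ Y, S (S Y) = Y) :
    letI R : Grass n → Grass n := fun x => S (LinearMap.mulLeft ℂ x) (topEl n)
    ∀ x : Grass n, R (R x) = ((-1 : ℂ) ^ (n * (n - 1) / 2)) • x :=
  grassmann_R_squared_general n der hder1 hderL S hSx
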